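/- arXiv:1006.5020 — 6 statements merged into one kernel-verified Lean document; each statement's English description precedes it below -/
import Mathlib

section
/- For two monomials x^α and x^β of the same degree r in K[x_0,…,x_n], x^α ≥_B x^β (i.e., x^β can be obtained from x^α by a finite sequence of elementary decreasing moves e⁻_i, which replace one factor x_i by x_{i-1}) if and only if for every index j, the partial sum σ(j) = Σ_{i=j}^{n} (α_i − β_i) is nonnegative. -/
open Finset

/-- Elementary decreasing move `e⁻_i` : replace one factor `x_i` by `x_{i-1}`. -/
def downAt (i : ℕ) (α : ℕ → ℕ) : ℕ → ℕ :=
  fun k => if k = i then α i - 1 else if k = i - 1 then α (i - 1) + 1 else α k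

/-- Elementary increasing move `e⁺_i` : replace one factor `x_i` by `x_{i+1}`. -/
def upAt (i : ℕ) (α : ℕ → ℕ) : ℕ → ℕ :=
  fun k => if k = i then α i - 1 else if k = i + 1 then α (i + 1) + 1 else α k

/-- `β` is obtained from `α` by one admissible decreasing move. -/
def DownStep (n : ℕ) (α β : ℕ → ℕ) : Prop :=
  ∃ i, 1 ≤ i ∧ i ≤ n ∧ 0 < α i ∧ β = downAt i α

/-- `β` is obtained from `α` by one admissible increasing move. -/
def UpStep (n : ℕ) (α β : ℕ → ℕ) : Prop :=
  ∃ i, i < n ∧ 0 < α i ∧ β = upAt i α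

/-- Borel partial order: `geB n α β` means `x^α ≥_B x^β`, i.e. `β` is reachable
from `α` by a finite sequence of decreasing moves. -/
def geB (n : ℕ) (α β : ℕ → ℕ) : Prop :=
  Relation.ReflTransGen (DownStep n) α β

/-- `Mon n r` : (exponents of) monomials of degree `r` in `x_0,…,x_n`, i.e. `𝒫(n,r)`. -/
def Mon (n r : ℕ) : Set (ℕ → ℕ) :=
  {α | (∀ k, n < k → α k = 0) ∧ ∑ i ∈ Finset.range (n + 1), α i = r}

/-- A Borel set in `𝒫(n,r)`: closed under admissible increasing moves. -/
def IsBorelSet (n r : ℕ) (B : Set (ℕ → ℕ)) : Prop :=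
  B ⊆ Mon n r ∧ ∀ α ∈ B, ∀ β, UpStep n α β → β ∈ B

/-- `σ(j) = ∑_{i=j}^n α_i`. -/
def sumFrom (n j : ℕ) (α : ℕ → ℕ) : ℕ := ∑ i ∈ Finset.Icc j n, α i

/-- Multiplication by the variable `x_i`. -/
def addVar (i : ℕ) (α : ℕ → ℕ) : ℕ → ℕ := fun k => if k = i then α k + 1 else α k

/-- Division by the variable `x_i`. -/
def subVar (i : ℕ) (α : ℕ → ℕ) : ℕ → ℕ := fun k => if k = i then α k - 1 else α k

/-- The result of applying the composition of decreasing moves `(e⁻_l)^{μ l}` (over all `l`). -/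
def applyMoves (μ α : ℕ → ℕ) : ℕ → ℕ := fun k => α k + μ (k + 1) - μ k

/-- The composition of decreasing moves encoded by `μ` is admissible on `α`. -/
def AdmissibleOn (μ α : ℕ → ℕ) : Prop := ∀ k, μ k ≤ α k + μ (k + 1)

/-- `𝔉_α` : admissible compositions of decreasing moves with indices in `[1,j]`
sending `α` inside `B` (contains the identity `μ = 0` as soon as `α ∈ B`). -/
def MovesFam (j : ℕ) (α : ℕ → ℕ) (B : Set (ℕ → ℕ)) : Set (ℕ → ℕ) :=
  {μ | (∀ l, μ l ≠ 0 → 1 ≤ l ∧ l ≤ j) ∧ AdmissibleOn μ α ∧ applyMoves μ α ∈ B}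

/-- `min x^γ` : least index of a variable dividing `x^γ`. -/
noncomputable def minIdx (γ : ℕ → ℕ) : ℕ := sInf {k | γ k ≠ 0}

/-- `x^α >_DegLex x^β` for monomials of the same degree (`x_n ≻ ⋯ ≻ x_0`). -/
def degLexGT (α β : ℕ → ℕ) : Prop :=
  ∃ j, β j < α j ∧ ∀ k, j < k → α k = β k

/-- `x^α >_RevLex x^β` for monomials of the same degree (`x_n ≻ ⋯ ≻ x_0`). -/
def revLexGT (α β : ℕ → ℕ) : Prop :=
  ∃ j, α j < β j ∧ ∀ k, k < j → α k = β k

/-- The monomial `x_1^k x_0^{d-k}`. -/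
def pure01 (d k : ℕ) : ℕ → ℕ :=
  fun m => if m = 1 then k else if m = 0 then d - k else 0

/-- For a Borel set `B` of degree-`d` monomials (points case), the regularity of the
saturation of `⟨B⟩` is the least `s` with `x_1^s x_0^{d-s} ∈ B`. -/
noncomputable def regSat (d : ℕ) (B : Set (ℕ → ℕ)) : ℕ := sInf {s | pure01 d s ∈ B}

/-- Degree-`d` part of the lexsegment ideal `L = (x_n,…,x_2,x_1^d)`. -/
def lexSegPts (n d : ℕ) : Set (ℕ → ℕ) :=
  {α ∈ Mon n d | (∃ i, 2 ≤ i ∧ i ≤ n ∧ 0 < α i) ∨ d ≤ α 1}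

/-- A monomial ideal in `K[x_0,…,x_n]`, given by its set of (exponents of) monomials. -/
def IsMonomialIdeal (n : ℕ) (S : Set (ℕ → ℕ)) : Prop :=
  (∀ α ∈ S, ∀ k, n < k → α k = 0) ∧ ∀ α ∈ S, ∀ k, k ≤ n → addVar k α ∈ S

/-- Strongly stable (Borel-fixed in characteristic 0): `x^α ∈ I`, `x_i ∣ x^α`, `i < j ≤ n`
implies `x_j x^α / x_i ∈ I`. -/
def StronglyStable (n : ℕ) (S : Set (ℕ → ℕ)) : Prop :=
  ∀ α ∈ S, ∀ i j, i < j → j ≤ n → 0 < α i →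
    (fun k => if k = i then α i - 1 else if k = j then α j + 1 else α k) ∈ S

/-- `x^α` is a minimal generator of the monomial ideal `S`. -/
def MinGen (n : ℕ) (S : Set (ℕ → ℕ)) (α : ℕ → ℕ) : Prop :=
  α ∈ S ∧ ∀ k, k ≤ n → 0 < α k → subVar k α ∉ S

lemma downAt_apply_of_ne {i k : ℕ} (α : ℕ → ℕ) (hk : k ≠ i) (hk' : k ≠ i - 1) :
    downAt i α k = α k := by simp [downAt, hk, hk']

lemma Icc_eq_insert (k n : ℕ) (h : k ≤ n) :
    Finset.Icc k n = insert k (Finset.Icc (k + 1) n) := by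
  ext m; simp only [Finset.mem_Icc, Finset.mem_insert]; omega

lemma sumFrom_succ (n k : ℕ) (h : k ≤ n) (α : ℕ → ℕ) :
    sumFrom n k α = α k + sumFrom n (k + 1) α := by
  rw [sumFrom, Icc_eq_insert k n h, Finset.sum_insert (by simp)]; rfl

lemma sumFrom_of_gt (n j : ℕ) (h : n < j) (α : ℕ → ℕ) : sumFrom n j α = 0 := by
  rw [sumFrom, Finset.Icc_eq_empty (by omega)]; rfl

lemma sumFrom_downAt_lt {i j n : ℕ} (α : ℕ → ℕ) (h1 : 1 ≤ i) (hn : i ≤ n) (ha : 0 < α i)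
    (hj : j < i) : sumFrom n j (downAt i α) = sumFrom n j α := by
  unfold sumFrom
  have hmi : i ∈ Finset.Icc j n := by simp [Finset.mem_Icc]; omega
  have hmi' : i - 1 ∈ (Finset.Icc j n).erase i := by
    simp [Finset.mem_erase, Finset.mem_Icc]; omega
  rw [← Finset.add_sum_erase _ _ hmi, ← Finset.add_sum_erase _ _ hmi',
      ← Finset.add_sum_erase _ (α ·) hmi, ← Finset.add_sum_erase _ (α ·) hmi']
  have hcongr : ∑ k ∈ ((Finset.Icc j n).erase i).erase (i - 1), downAt i α k =
      ∑ k ∈ ((Finset.Icc j n).erase i).erase (i - 1), α k := by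
    refine Finset.sum_congr rfl fun k hk => ?_
    simp only [Finset.mem_erase] at hk
    exact downAt_apply_of_ne α hk.2.1 hk.1
  rw [hcongr]
  have e1 : downAt i α i = α i - 1 := by simp [downAt]
  have e2 : downAt i α (i - 1) = α (i - 1) + 1 := by
    have : i - 1 ≠ i := by omega
    simp [downAt, this]
  rw [e1, e2]; omega

lemma sumFrom_downAt_self {i n : ℕ} (α : ℕ → ℕ) (h1 : 1 ≤ i) (hn : i ≤ n) (ha : 0 < α i) :
    sumFrom n i (downAt i α) + 1 = sumFrom n i α := by
  rw [sumFrom_succ n i hn, sumFrom_succ n i hn]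
  have e1 : downAt i α i = α i - 1 := by simp [downAt]
  have e2 : sumFrom n (i + 1) (downAt i α) = sumFrom n (i + 1) α := by
    refine Finset.sum_congr rfl fun k hk => ?_
    simp only [Finset.mem_Icc] at hk
    exact downAt_apply_of_ne α (by omega) (by omega)
  rw [e1, e2]; omega

lemma sumFrom_downAt_gt {i j n : ℕ} (α : ℕ → ℕ) (h1 : 1 ≤ i) (hj : i < j) :
    sumFrom n j (downAt i α) = sumFrom n j α := by
  refine Finset.sum_congr rfl fun k hk => ?_
  simp only [Finset.mem_Icc] at hk
  exact downAt_apply_of_ne α (by omega) (by omega)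

lemma sumFrom_downAt_le {i j n : ℕ} (α : ℕ → ℕ) (h1 : 1 ≤ i) (hn : i ≤ n) (ha : 0 < α i) :
    sumFrom n j (downAt i α) ≤ sumFrom n j α := by
  rcases lt_trichotomy j i with h | rfl | h
  · rw [sumFrom_downAt_lt α h1 hn ha h]
  · have := sumFrom_downAt_self α h1 hn ha; omega
  · rw [sumFrom_downAt_gt α h1 h]

lemma eq_of_sumFrom_eq {n : ℕ} {α β : ℕ → ℕ} (hα : ∀ k, n < k → α k = 0)
    (hβ : ∀ k, n < k → β k = 0) (h : ∀ j, sumFrom n j α = sumFrom n j β) : α = β := by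
  funext k
  by_cases hk : k ≤ n
  · have e1 := sumFrom_succ n k hk α
    have e2 := sumFrom_succ n k hk β
    have e3 := h k
    have e4 := h (k + 1)
    omega
  · rw [hα k (by omega), hβ k (by omega)]

lemma geB_key (n : ℕ) : ∀ (D : ℕ) (α β : ℕ → ℕ), (∀ k, n < k → α k = 0) →
    (∀ k, n < k → β k = 0) → sumFrom n 0 α = sumFrom n 0 β →
    (∀ j, sumFrom n j β ≤ sumFrom n j α) →
    (∑ j ∈ Finset.range (n + 1), (sumFrom n j α - sumFrom n j β)) ≤ D → geB n α β := by
  intro D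
  induction D with
  | zero =>
    intro α β hα hβ h0 hle hD
    have hz : ∀ j ∈ Finset.range (n + 1), sumFrom n j α - sumFrom n j β = 0 :=
      Finset.sum_eq_zero_iff.mp (Nat.le_zero.mp hD)
    have heq : ∀ j, sumFrom n j α = sumFrom n j β := by
      intro j
      by_cases hj : j ≤ n
      · have := hz j (by simp [Finset.mem_range]; omega)
        have := hle j; omega
      · rw [sumFrom_of_gt n j (by omega), sumFrom_of_gt n j (by omega)]
    rw [eq_of_sumFrom_eq hα hβ heq]
    exact Relation.ReflTransGen.refl
  | succ D ih =>
    intro α β hα hβ h0 hle hD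
    by_cases hc : ∀ j, sumFrom n j α = sumFrom n j β
    · rw [eq_of_sumFrom_eq hα hβ hc]
      exact Relation.ReflTransGen.refl
    · push_neg at hc
      obtain ⟨j₀, hj₀⟩ := hc
      have hj₀n : j₀ ≤ n := by
        by_contra hcon
        exact hj₀ (by rw [sumFrom_of_gt n j₀ (by omega), sumFrom_of_gt n j₀ (by omega)])
      have hP₀ : sumFrom n j₀ β < sumFrom n j₀ α := lt_of_le_of_ne (hle j₀) fun h => hj₀ h.symm
      set P : ℕ → Prop := fun j => sumFrom n j β < sumFrom n j α with hPdef
      have : DecidablePred P := fun j => Nat.decLt _ _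
      set i := Nat.findGreatest P n with hi
      have hPi : P i := Nat.findGreatest_spec hj₀n hP₀
      have hin : i ≤ n := Nat.findGreatest_le n
      have hi1 : 1 ≤ i := by
        rcases Nat.eq_zero_or_pos i with h | h
        · exfalso; rw [h] at hPi; exact absurd h0 (Nat.ne_of_gt hPi)
        · omega
      have habove : ∀ j, i < j → sumFrom n j α = sumFrom n j β := by
        intro j hj
        by_cases hjn : j ≤ n
        · have := Nat.findGreatest_is_greatest (P := P) hj hjn
          have := hle j
          omega
        · rw [sumFrom_of_gt n j (by omega), sumFrom_of_gt n j (by omega)]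
      have hai : 0 < α i := by
        have e1 := sumFrom_succ n i hin α
        have e2 := sumFrom_succ n i hin β
        have e3 := habove (i + 1) (by omega)
        have e4 : sumFrom n i β < sumFrom n i α := hPi
        omega
      have hstep : DownStep n α (downAt i α) := ⟨i, hi1, hin, hai, rfl⟩
      have hα' : ∀ k, n < k → downAt i α k = 0 := by
        intro k hk
        rw [downAt_apply_of_ne α (by omega) (by omega)]
        exact hα k hk
      have h0' : sumFrom n 0 (downAt i α) = sumFrom n 0 β := by
        rw [sumFrom_downAt_lt α hi1 hin hai (by omega)]; exact h0
      have hle' : ∀ j, sumFrom n j β ≤ sumFrom n j (downAt i α) := by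
        intro j
        rcases lt_trichotomy j i with h | rfl | h
        · rw [sumFrom_downAt_lt α hi1 hin hai h]; exact hle j
        · have := sumFrom_downAt_self α hi1 hin hai
          have : sumFrom n i β < sumFrom n i α := hPi
          omega
        · rw [sumFrom_downAt_gt α hi1 h]; exact hle j
      have hD' : (∑ j ∈ Finset.range (n + 1),
          (sumFrom n j (downAt i α) - sumFrom n j β)) ≤ D := by
        have hlt : (∑ j ∈ Finset.range (n + 1), (sumFrom n j (downAt i α) - sumFrom n j β)) <
            ∑ j ∈ Finset.range (n + 1), (sumFrom n j α - sumFrom n j β) := by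
          refine Finset.sum_lt_sum (fun j _ => ?_) ⟨i, by simp [Finset.mem_range]; omega, ?_⟩
          · exact Nat.sub_le_sub_right (sumFrom_downAt_le α hi1 hin hai) _
          · have e1 := sumFrom_downAt_self α hi1 hin hai
            have e2 := hle' i
            omega
        omega
      exact Relation.ReflTransGen.head hstep
        (ih (downAt i α) β hα' hβ h0' hle' hD')

/-- x^a >=_B x^b iff all partial sums from j to n are >= 0. -/
theorem stmt_0 (n r : ℕ) (α β : ℕ → ℕ) (hα : α ∈ Mon n r) (hβ : β ∈ Mon n r) :
    geB n α β ↔ ∀ j, sumFrom n j β ≤ sumFrom n j α := by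
  constructor
  · intro h j
    clear hα hβ
    induction h with
    | refl => exact le_refl _
    | tail hst step ih =>
      obtain ⟨i, h1, hn, ha, rfl⟩ := step
      exact le_trans (sumFrom_downAt_le _ h1 hn ha) ih
  · intro h
    obtain ⟨hαs, hαr⟩ := hα
    obtain ⟨hβs, hβr⟩ := hβ
    have hIcc : Finset.Icc 0 n = Finset.range (n + 1) := by
      ext m; simp [Finset.mem_Icc, Finset.mem_range]
    have h0 : sumFrom n 0 α = sumFrom n 0 β := by
      unfold sumFrom; rw [hIcc, hαr, hβr]
    exact geB_key n _ α β hαs hβs h0 h (le_refl _)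
end

section
/- Let B ⊆ P(n,r) be a Borel set, with x^α ∈ 𝔪(B_j) a minimal element of B_j = B ∩ P(n−j,r) having min x^α = j, and x^β ∈ 𝔐(N_j) a maximal element of N_j = N ∩ P(n−j,r) with min x^β = j, where N = P(n,r) \ B. Let 𝔉_α be the family of admissible compositions of decreasing moves F = (e⁻_{l_s})^{λ_s} ⋯ (e⁻_{l_1})^{λ_1} with j ≥ l_1 > ⋯ > l_s such that F(x^α) ∈ B, together with the identity. Assume: (i) for every admissible e⁻_k with k > j, e⁻_k(x^α) ≠ x^β; (ii) every F ∈ 𝔉_α is admissible on x^β and e⁺_i(F(x^β)) ∈ B for every admissible increasing move e⁺_i with i ≥ j. Then B̃ = (B ∪ 𝔉_α(x^β)) \ 𝔉_α(x^α) is a Borel set, and |B̃ ∩ P(n−i,r)| = |B ∩ P(n−i,r)| for every i. -/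
/-!
A composition of decreasing moves is recorded by its exponent vector `μ` (`μ l` copies of
`e⁻_l`), so that `F(x^γ) = applyMoves μ γ`. A Borel set is closed under undoing moves, hence
`𝔉_α(x^α) ⊆ B` while `𝔉_α(x^β)` misses `B`. An increasing move `e⁺_i` applied inside `B̃` stays in
`B̃`: for `i < j` it only lowers or raises `μ (i + 1)` by one, so it stays in the same orbit; for
`i ≥ j` it commutes with every move of `𝔉_α`, and landing in `𝔉_α(x^α)` would contradict the
minimality of `x^α` (starting from `B`) or hypothesis (i) (starting from `𝔉_α(x^β)`).
For the counts: `applyMoves μ γ` lies in `P(n-m, r)` exactly when `m ≤ j` and `μ m = 0`, for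
`γ = α` and `γ = β` alike, and `μ ↦ applyMoves μ γ` is injective, so the two orbits meet every
`P(n-m, r)` in equally many monomials.
-/

open Finset

section Moves

variable {i j : ℕ} {μ ν γ α : ℕ → ℕ}

@[simp]
lemma applyMoves_zero (γ : ℕ → ℕ) : applyMoves 0 γ = γ := by
  funext k; simp [applyMoves]

lemma applyMoves_of_lt (hμ : ∀ l, j < l → μ l = 0) {k : ℕ} (hk : j < k) :
    applyMoves μ γ k = γ k := by
  simp [applyMoves, hμ k hk, hμ (k + 1) (by omega)]

lemma downAt_succ_upAt (h : 0 < γ i) : downAt (i + 1) (upAt i γ) = γ := by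
  funext k; simp only [downAt, upAt, Nat.add_sub_cancel]; split_ifs <;> subst_vars <;> omega

lemma applyMoves_update_succ_add (h : μ i ≤ γ i + μ (i + 1)) :
    applyMoves (Function.update μ (i + 1) (μ (i + 1) + 1)) γ = downAt (i + 1) (applyMoves μ γ) := by
  funext k
  simp only [applyMoves, downAt, Function.update_apply, Nat.add_sub_cancel]
  split_ifs <;> subst_vars <;> omega

lemma applyMoves_update_succ_sub (ha : AdmissibleOn μ γ) (hμ : 0 < μ (i + 1))
    (hpos : 0 < applyMoves μ γ i) :
    applyMoves (Function.update μ (i + 1) (μ (i + 1) - 1)) γ = upAt i (applyMoves μ γ) := by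
  unfold applyMoves at hpos
  have := ha (i + 1)
  funext k
  simp only [applyMoves, upAt, Function.update_apply]
  split_ifs <;> subst_vars <;> omega

lemma AdmissibleOn.update_succ_add (ha : AdmissibleOn μ γ) (hpos : 0 < applyMoves μ γ (i + 1)) :
    AdmissibleOn (Function.update μ (i + 1) (μ (i + 1) + 1)) γ := by
  unfold applyMoves at hpos
  intro k
  have := ha k
  simp only [Function.update_apply, add_left_inj]
  split_ifs <;> subst_vars <;> omega

lemma AdmissibleOn.update_succ_sub (ha : AdmissibleOn μ γ) (hpos : 0 < applyMoves μ γ i) :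
    AdmissibleOn (Function.update μ (i + 1) (μ (i + 1) - 1)) γ := by
  unfold applyMoves at hpos
  intro k
  have := ha k
  simp only [Function.update_apply, add_left_inj]
  split_ifs <;> subst_vars <;> omega

lemma AdmissibleOn.downAt_succ (ha : AdmissibleOn ν α) (hν : ν (i + 1) = 0) :
    AdmissibleOn ν (downAt (i + 1) α) := by
  intro k
  have := ha k
  simp only [downAt, Nat.add_sub_cancel]
  split_ifs <;> subst_vars <;> omega

lemma applyMoves_downAt_succ (ha : AdmissibleOn ν α) (hν : ν (i + 1) = 0) (hα : 0 < α (i + 1)) :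
    applyMoves ν (downAt (i + 1) α) = downAt (i + 1) (applyMoves ν α) := by
  funext k
  have := ha k
  simp only [applyMoves, downAt, Nat.add_sub_cancel]
  split_ifs <;> subst_vars <;> omega

end Moves

section Mon

variable {n r j : ℕ} {μ γ δ : ℕ → ℕ}

lemma Mon.apply_le (hγ : γ ∈ Mon n r) {k : ℕ} (hk : k ≤ n) : γ k ≤ r :=
  hγ.2 ▸ Finset.single_le_sum (fun _ _ => Nat.zero_le _) (Finset.mem_range.2 (Nat.lt_succ_of_le hk))

lemma Mon.finite (n r : ℕ) : (Mon n r).Finite := by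
  refine Set.Finite.of_finite_image (f := fun γ (k : Fin (n + 1)) => Fin.ofNat (r + 1) (γ k))
    (Set.toFinite _) fun γ hγ δ hδ h => funext fun k => ?_
  by_cases hk : k ≤ n
  · have := congrArg Fin.val (congrFun h ⟨k, Nat.lt_succ_of_le hk⟩)
    simpa [Nat.mod_eq_of_lt (Nat.lt_succ_of_le (Mon.apply_le hγ hk)),
      Nat.mod_eq_of_lt (Nat.lt_succ_of_le (Mon.apply_le hδ hk))] using this
  · rw [hγ.1 k (by omega), hδ.1 k (by omega)]

lemma Mon.ext (hγ : γ ∈ Mon n r) (hδ : δ ∈ Mon n r) {a : ℕ} (ha : a ≤ n)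
    (h : ∀ k, k ≠ a → γ k = δ k) : γ = δ := by
  have hmem : a ∈ Finset.range (n + 1) := Finset.mem_range.2 (Nat.lt_succ_of_le ha)
  have hrest : ∑ k ∈ (Finset.range (n + 1)).erase a, γ k
      = ∑ k ∈ (Finset.range (n + 1)).erase a, δ k :=
    Finset.sum_congr rfl fun k hk => h k (Finset.ne_of_mem_erase hk)
  have hsum := hγ.2.trans hδ.2.symm
  rw [← Finset.add_sum_erase _ _ hmem, ← Finset.add_sum_erase _ _ hmem, hrest] at hsum
  funext k
  by_cases hk : k = a
  · subst hk; omega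
  · exact h k hk

lemma applyMoves_mem_Mon (hj : j ≤ n) (h0 : μ 0 = 0) (hμ : ∀ l, j < l → μ l = 0)
    (ha : AdmissibleOn μ γ) (hγ : γ ∈ Mon n r) : applyMoves μ γ ∈ Mon n r := by
  refine ⟨fun k hk => (applyMoves_of_lt hμ (by omega)).trans (hγ.1 k hk), ?_⟩
  have hpt : ∀ k ∈ Finset.range (n + 1), applyMoves μ γ k + μ k = γ k + μ (k + 1) := by
    intro k _
    have := ha k
    unfold applyMoves
    omega
  have hsum := Finset.sum_congr rfl hpt
  rw [Finset.sum_add_distrib, Finset.sum_add_distrib, Finset.sum_range_succ' μ,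
    Finset.sum_range_succ (fun k => μ (k + 1)), h0, hμ (n + 1) (by omega), hγ.2] at hsum
  omega

lemma downAt_mem_Mon {i : ℕ} (hγ : γ ∈ Mon n r) (hi : i + 1 ≤ n) (hpos : 0 < γ (i + 1)) :
    downAt (i + 1) γ ∈ Mon n r := by
  have h := applyMoves_update_succ_add (μ := 0) (γ := γ) (i := i) (by simp)
  rw [applyMoves_zero] at h
  rw [← h]
  refine applyMoves_mem_Mon hi (by simp) (fun l hl => by simp [Function.update_apply]; omega) ?_ hγ
  exact AdmissibleOn.update_succ_add (fun _ => Nat.zero_le _) (by simpa using hpos)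

end Mon

section Borel

variable {n r j : ℕ} {B : Set (ℕ → ℕ)} {μ ν γ : ℕ → ℕ}

/-- Undoing the moves one increasing step at a time, always at the lowest index moved, stays
inside the Borel set. -/
theorem IsBorelSet.mem_of_applyMoves_mem (hB : IsBorelSet n r B) (hj : j ≤ n) (h0 : μ 0 = 0)
    (hμ : ∀ l, j < l → μ l = 0) (ha : AdmissibleOn μ γ) (h : applyMoves μ γ ∈ B) : γ ∈ B := by
  classical
  induction hs : ∑ l ∈ Finset.range (j + 1), μ l generalizing μ with
  | zero =>
    have hzero : μ = 0 := funext fun l => by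
      by_cases hl : j < l
      · exact hμ l hl
      · exact (Finset.sum_eq_zero_iff.1 hs) l (Finset.mem_range.2 (by omega))
    simpa [hzero] using h
  | succ s ih =>
    have hex : ∃ l, μ l ≠ 0 := by
      by_contra! hz
      simp [hz] at hs
    obtain ⟨m, hm⟩ : ∃ m, Nat.find hex = m + 1 :=
      Nat.exists_eq_succ_of_ne_zero fun h' => Nat.find_spec hex (by rw [h']; exact h0)
    have hμm : μ m = 0 := by_contra fun h' => Nat.find_min hex (by omega) h'
    have hμm1 : 0 < μ (m + 1) := Nat.pos_of_ne_zero (hm ▸ Nat.find_spec hex)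
    have hmj : m + 1 ≤ j := by by_contra h'; exact (hm ▸ Nat.find_spec hex) (hμ _ (by omega))
    have hpos : 0 < applyMoves μ γ m := by unfold applyMoves; omega
    refine ih (μ := Function.update μ (m + 1) (μ (m + 1) - 1))
      (by rw [Function.update_of_ne (by omega)]; exact h0)
      (fun l hl => by rw [Function.update_of_ne (by omega)]; exact hμ l hl)
      (ha.update_succ_sub hpos) ?_ ?_
    · rw [applyMoves_update_succ_sub ha hμm1 hpos]
      exact hB.2 _ h _ ⟨m, by omega, hpos, rfl⟩
    · have hm1 : m + 1 ∈ Finset.range (j + 1) := Finset.mem_range.2 (by omega)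
      rw [Finset.sum_update_of_mem hm1]
      rw [Finset.sum_eq_add_sum_sdiff_singleton_of_mem hm1] at hs
      omega

end Borel

section Sections

variable {j m : ℕ} {μ ν γ : ℕ → ℕ}

/-- Admissibility makes `applyMoves μ γ k + μ k = γ k + μ (k + 1)`, which recovers `μ` from the
top index down. -/
lemma eq_of_applyMoves_eq (hμ : ∀ l, j < l → μ l = 0) (hν : ∀ l, j < l → ν l = 0)
    (hμa : AdmissibleOn μ γ) (hνa : AdmissibleOn ν γ) (h : applyMoves μ γ = applyMoves ν γ) :
    μ = ν := by
  have key : ∀ d k, j < k + d → μ k = ν k := by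
    intro d
    induction d with
    | zero => intro k hk; rw [hμ k hk, hν k hk]
    | succ d ih =>
      intro k hk
      have hk1 := ih (k + 1) (by omega)
      have e := congrFun h k
      have := hμa k
      have := hνa k
      unfold applyMoves at e
      omega
  exact funext fun k => key (j + 1) k (by omega)

lemma applyMoves_eq_zero_below_iff (hγ0 : ∀ k, k < j → γ k = 0) (hγj : γ j ≠ 0) (h0 : μ 0 = 0)
    (hμ : ∀ l, j < l → μ l = 0) (ha : AdmissibleOn μ γ) :
    (∀ k, k < m → applyMoves μ γ k = 0) ↔ m ≤ j ∧ μ m = 0 := by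
  unfold applyMoves
  constructor
  · intro h
    have hz : ∀ k, k ≤ j → k ≤ m → μ k = 0 := by
      intro k
      induction k with
      | zero => exact fun _ _ => h0
      | succ k ih =>
        intro hkj hkm
        have := h k (by omega)
        have := ih (by omega) (by omega)
        have := hγ0 k (by omega)
        omega
    have hmj : m ≤ j := by
      by_contra hc
      have := h j (by omega)
      have := hz j le_rfl (by omega)
      have := hμ (j + 1) (by omega)
      omega
    exact ⟨hmj, hz m hmj le_rfl⟩
  · rintro ⟨hmj, hm0⟩
    have hz : ∀ d k, k + d = m → μ k = 0 := by
      intro d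
      induction d with
      | zero => intro k hk; rwa [show k = m by omega]
      | succ d ih =>
        intro k hk
        have := ha k
        have := ih (k + 1) (by omega)
        have := hγ0 k (by omega)
        omega
    intro k hk
    rw [hγ0 k (by omega), hz (m - (k + 1)) (k + 1) (by omega), hz (m - k) k (by omega)]

lemma ncard_image_applyMoves_inter {F : Set (ℕ → ℕ)} (hγ0 : ∀ k, k < j → γ k = 0) (hγj : γ j ≠ 0)
    (h0 : ∀ μ ∈ F, μ 0 = 0) (hvan : ∀ μ ∈ F, ∀ l, j < l → μ l = 0)
    (ha : ∀ μ ∈ F, AdmissibleOn μ γ) (m : ℕ) :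
    ((fun μ => applyMoves μ γ) '' F ∩ {x | ∀ k, k < m → x k = 0}).ncard
      = {μ ∈ F | m ≤ j ∧ μ m = 0}.ncard := by
  have himage : (fun μ => applyMoves μ γ) '' F ∩ {x | ∀ k, k < m → x k = 0}
      = (fun μ => applyMoves μ γ) '' {μ ∈ F | m ≤ j ∧ μ m = 0} := by
    ext x
    simp only [Set.mem_inter_iff, Set.mem_image, Set.mem_ofPred_eq]
    constructor
    · rintro ⟨⟨μ, hμ, rfl⟩, hx⟩
      exact ⟨μ, ⟨hμ, (applyMoves_eq_zero_below_iff hγ0 hγj (h0 μ hμ) (hvan μ hμ) (ha μ hμ)).1 hx⟩,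
        rfl⟩
    · rintro ⟨μ, ⟨hμ, hm⟩, rfl⟩
      exact ⟨⟨μ, hμ, rfl⟩,
        (applyMoves_eq_zero_below_iff hγ0 hγj (h0 μ hμ) (hvan μ hμ) (ha μ hμ)).2 hm⟩
  rw [himage, Set.InjOn.ncard_image fun μ hμ ν hν h =>
    eq_of_applyMoves_eq (hvan μ hμ.1) (hvan ν hν.1) (ha μ hμ.1) (ha ν hν.1) h]

lemma Set.ncard_union_sdiff_eq_of_ncard_eq {α : Type*} {A B C : Set α} (hB : B.Finite)
    (hC : C.Finite) (hAB : A ⊆ B) (hCB : Disjoint C B) (h : A.ncard = C.ncard) : ((B ∪ C) \ A).ncard = B.ncard := by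
  have hCA : Disjoint C A := hCB.mono_right hAB
  rw [Set.union_sdiff_distrib, hCA.sdiff_eq_left, Set.ncard_union_eq
    (hCB.symm.mono_left Set.sdiff_subset) hB.sdiff hC, Set.ncard_sdiff hAB (hB.subset hAB), h]
  have := Set.ncard_le_ncard hAB hB
  omega

end Sections

section Swap

variable {n r j : ℕ} {B : Set (ℕ → ℕ)} {α β μ : ℕ → ℕ}

lemma MovesFam.apply_zero (hμ : μ ∈ MovesFam j α B) : μ 0 = 0 :=
  by_contra fun h => absurd (hμ.1 0 h).1 (by omega)

lemma MovesFam.apply_of_lt (hμ : μ ∈ MovesFam j α B) : ∀ l, j < l → μ l = 0 :=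
  fun l hl => by_contra fun h => absurd (hμ.1 l h).2 (by omega)

lemma support_update_subset {a v : ℕ} (hμ : ∀ l, μ l ≠ 0 → 1 ≤ l ∧ l ≤ j) (ha : 1 ≤ a)
    (haj : a ≤ j) : ∀ l, Function.update μ a v l ≠ 0 → 1 ≤ l ∧ l ≤ j := by
  intro l hl
  by_cases h : l = a
  · omega
  · rw [Function.update_of_ne h] at hl
    exact hμ l hl

/-- For `i < j` one more move `e⁻_{i+1}` sends `α` to `γ`; for `i ≥ j` the moves commute with
`e⁻_{i+1}`, which would put `downAt (i + 1) α` in `B`. -/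
lemma mem_image_of_upAt_mem_image (hB : IsBorelSet n r B) (hj : j ≤ n)
    (hαmin : ∀ i, j < i → i ≤ n → 0 < α i → downAt i α ∉ B) {γ : ℕ → ℕ} (hγ : γ ∈ B) {i : ℕ}
    (hin : i < n) (hγi : 0 < γ i) (h : upAt i γ ∈ (fun μ => applyMoves μ α) '' MovesFam j α B) :
    γ ∈ (fun μ => applyMoves μ α) '' MovesFam j α B := by
  obtain ⟨ν, hν, hνγ : applyMoves ν α = upAt i γ⟩ := h
  have hνa : AdmissibleOn ν α := hν.2.1
  have hpos : 0 < applyMoves ν α (i + 1) := by simp [hνγ, upAt]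
  have hdown : downAt (i + 1) (applyMoves ν α) = γ := by rw [hνγ, downAt_succ_upAt hγi]
  by_cases hij : i + 1 ≤ j
  · have hmoves := applyMoves_update_succ_add (hνa i)
    refine ⟨Function.update ν (i + 1) (ν (i + 1) + 1),
      ⟨support_update_subset hν.1 (by omega) hij, hνa.update_succ_add hpos, ?_⟩, ?_⟩
    · rw [hmoves, hdown]
      exact hγ
    · exact hmoves.trans hdown
  · have hνi1 : ν (i + 1) = 0 := MovesFam.apply_of_lt hν _ (by omega)
    have hαi1 : 0 < α (i + 1) := by
      rwa [applyMoves_of_lt (MovesFam.apply_of_lt hν) (by omega)] at hpos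
    refine absurd (hB.mem_of_applyMoves_mem hj (MovesFam.apply_zero hν)
      (MovesFam.apply_of_lt hν) (hνa.downAt_succ hνi1) ?_) (hαmin _ (by omega) hin hαi1)
    rw [applyMoves_downAt_succ hνa hνi1 hαi1, hdown]
    exact hγ

/-- A preimage `ν` would give `applyMoves μ β = applyMoves ν (downAt (i + 1) α)`; as no move acts
above `j`, `β` and `downAt (i + 1) α` agree off `j`, hence everywhere, against `h1`. -/
lemma upAt_applyMoves_notMem_image (hαmon : α ∈ Mon n r) (hβmon : β ∈ Mon n r)
    (hα0 : ∀ k, k < j → α k = 0) (hβ0 : ∀ k, k < j → β k = 0)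
    (h1 : ∀ i, j < i → i ≤ n → 0 < α i → downAt i α ≠ β) (hμ : ∀ l, j < l → μ l = 0) {i : ℕ}
    (hji : j ≤ i) (hpos : 0 < applyMoves μ β i) :
    upAt i (applyMoves μ β) ∉ (fun μ => applyMoves μ α) '' MovesFam j α B := by
  rintro ⟨ν, hν, hνμ : applyMoves ν α = upAt i (applyMoves μ β)⟩
  have hνi1 : ν (i + 1) = 0 := MovesFam.apply_of_lt hν _ (by omega)
  have hαi1 : 0 < α (i + 1) := by
    have := congrFun hνμ (i + 1)
    rw [applyMoves_of_lt (MovesFam.apply_of_lt hν) (by omega)] at this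
    simp [this, upAt]
  have hin : i + 1 ≤ n := by
    by_contra h
    exact hαi1.ne' (hαmon.1 _ (by omega))
  have heq : applyMoves μ β = applyMoves ν (downAt (i + 1) α) := by
    rw [applyMoves_downAt_succ hν.2.1 hνi1 hαi1, hνμ, downAt_succ_upAt hpos]
  refine h1 (i + 1) (by omega) hin hαi1 <|
    Mon.ext (downAt_mem_Mon hαmon hin hαi1) hβmon (a := j) (by omega) fun k hk => ?_
  rcases Nat.lt_or_gt_of_ne hk with hk | hk
  · rw [hβ0 k hk, ← hα0 k hk]
    simp only [downAt]
    split_ifs <;> omega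
  · have := congrFun heq k
    rwa [applyMoves_of_lt hμ hk, applyMoves_of_lt (MovesFam.apply_of_lt hν) hk, eq_comm] at this

lemma upAt_applyMoves_mem_image (hB : IsBorelSet n r B) (hj : j ≤ n)
    (hα0 : ∀ k, k < j → α k = 0) (hβ0 : ∀ k, k < j → β k = 0)
    (hβadm : ∀ μ ∈ MovesFam j α B, AdmissibleOn μ β) (hμ : μ ∈ MovesFam j α B) {i : ℕ}
    (hij : i < j) (hpos : 0 < applyMoves μ β i) :
    upAt i (applyMoves μ β) ∈ (fun μ => applyMoves μ β) '' MovesFam j α B := by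
  have hμa : AdmissibleOn μ α := hμ.2.1
  have hμi : μ i < μ (i + 1) := by
    unfold applyMoves at hpos
    rw [hβ0 i hij] at hpos
    omega
  have hposα : 0 < applyMoves μ α i := by
    unfold applyMoves
    rw [hα0 i hij]
    omega
  refine ⟨Function.update μ (i + 1) (μ (i + 1) - 1),
    ⟨support_update_subset hμ.1 (by omega) hij, hμa.update_succ_sub hposα, ?_⟩,
    applyMoves_update_succ_sub (hβadm μ hμ) (by omega) hpos⟩
  rw [applyMoves_update_succ_sub hμa (by omega) hposα]
  exact hB.2 _ hμ.2.2 _ ⟨i, by omega, hposα, rfl⟩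

lemma image_applyMoves_subset_Mon_sdiff (hB : IsBorelSet n r B) (hj : j ≤ n) (hβmon : β ∈ Mon n r)
    (hβB : β ∉ B) (hβadm : ∀ μ ∈ MovesFam j α B, AdmissibleOn μ β) :
    (fun μ => applyMoves μ β) '' MovesFam j α B ⊆ Mon n r \ B := by
  rintro _ ⟨μ, hμ, rfl⟩
  have h0 := MovesFam.apply_zero hμ
  have hvan := MovesFam.apply_of_lt hμ
  exact ⟨applyMoves_mem_Mon hj h0 hvan (hβadm μ hμ) hβmon,
    fun h => hβB (hB.mem_of_applyMoves_mem hj h0 hvan (hβadm μ hμ) h)⟩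

end Swap

theorem stmt_8_general (n r j : ℕ) (B : Set (ℕ → ℕ)) (hB : IsBorelSet n r B)
    (α β : ℕ → ℕ)
    (hαB : α ∈ B) (hα0 : ∀ k, k < j → α k = 0) (hαj : α j ≠ 0)
    (hαmin : ∀ i, j < i → i ≤ n → 0 < α i → downAt i α ∉ B)
    (hβmon : β ∈ Mon n r) (hβB : β ∉ B) (hβ0 : ∀ k, k < j → β k = 0) (hβj : β j ≠ 0)
    (h1 : ∀ i, j < i → i ≤ n → 0 < α i → downAt i α ≠ β)
    (h2 : ∀ μ ∈ MovesFam j α B, AdmissibleOn μ β ∧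
          ∀ i, j ≤ i → i < n → 0 < applyMoves μ β i → upAt i (applyMoves μ β) ∈ B) :
    IsBorelSet n r
      ((B ∪ (fun μ => applyMoves μ β) '' MovesFam j α B) \
        ((fun μ => applyMoves μ α) '' MovesFam j α B)) ∧
    ∀ i, (((B ∪ (fun μ => applyMoves μ β) '' MovesFam j α B) \
        ((fun μ => applyMoves μ α) '' MovesFam j α B)) ∩
          {γ | ∀ k, k < i → γ k = 0}).ncard
        = (B ∩ {γ | ∀ k, k < i → γ k = 0}).ncard := by
  set F := MovesFam j α B
  have hαmon : α ∈ Mon n r := hB.1 hαB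
  have hj : j ≤ n := by
    by_contra h
    exact hαj (hαmon.1 j (by omega))
  have hβadm : ∀ μ ∈ F, AdmissibleOn μ β := fun μ hμ => (h2 μ hμ).1
  have hFα : (fun μ => applyMoves μ α) '' F ⊆ B := Set.image_subset_iff.2 fun μ hμ => hμ.2.2
  have hFβ := image_applyMoves_subset_Mon_sdiff hB hj hβmon hβB hβadm
  refine ⟨⟨fun γ hγ => hγ.1.elim (fun h => hB.1 h) (fun h => (hFβ h).1), ?_⟩, fun m => ?_⟩
  · rintro γ ⟨hγ | ⟨μ, hμ, rfl⟩, hγα⟩ δ ⟨i, hin, hγi, rfl⟩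
    · exact ⟨.inl (hB.2 γ hγ _ ⟨i, hin, hγi, rfl⟩),
        fun h => hγα (mem_image_of_upAt_mem_image hB hj hαmin hγ hin hγi h)⟩
    · rcases lt_or_ge i j with hij | hji
      · have h := upAt_applyMoves_mem_image hB hj hα0 hβ0 hβadm hμ hij hγi
        exact ⟨.inr h, fun h' => (hFβ h).2 (hFα h')⟩
      · exact ⟨.inl ((h2 μ hμ).2 i hji hin hγi), upAt_applyMoves_notMem_image hαmon hβmon hα0 hβ0 h1
          (MovesFam.apply_of_lt hμ) hji hγi⟩
  · rw [Set.inter_sdiff_distrib_right, Set.union_inter_distrib_right]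
    refine Set.ncard_union_sdiff_eq_of_ncard_eq (((Mon.finite n r).subset hB.1).inter_of_left _)
      (((Mon.finite n r).subset fun _ h => (hFβ h).1).inter_of_left _)
      (Set.inter_subset_inter_left _ hFα) (Set.disjoint_left.2 fun _ h h' => (hFβ h.1).2 h'.1) ?_
    have h0 : ∀ μ ∈ F, μ 0 = 0 := fun μ => MovesFam.apply_zero
    have hvan : ∀ μ ∈ F, ∀ l, j < l → μ l = 0 := fun μ => MovesFam.apply_of_lt
    rw [ncard_image_applyMoves_inter hα0 hαj h0 hvan (fun μ hμ => hμ.2.1),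
      ncard_image_applyMoves_inter hβ0 hβj h0 hvan hβadm]

/-- swapping the orbit of a minimal element under the Borel-consistent family
of decreasing moves with the orbit of a maximal element of the complement preserves the
Borel condition and all the cardinalities of the sections. -/
theorem stmt_8 (n r j : ℕ) (B : Set (ℕ → ℕ)) (hB : IsBorelSet n r B)
    (α β : ℕ → ℕ)
    (hαB : α ∈ B) (hα0 : ∀ k, k < j → α k = 0) (hαj : α j ≠ 0)
    (hαmin : ∀ i, j < i → i ≤ n → 0 < α i → downAt i α ∉ B)
    (hβmon : β ∈ Mon n r) (hβB : β ∉ B) (hβ0 : ∀ k, k < j → β k = 0) (hβj : β j ≠ 0)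
    (hβmax : ∀ i, j ≤ i → i < n → 0 < β i → upAt i β ∈ B)
    (h1 : ∀ i, j < i → i ≤ n → 0 < α i → downAt i α ≠ β)
    (h2 : ∀ μ ∈ MovesFam j α B, AdmissibleOn μ β ∧
          ∀ i, j ≤ i → i < n → 0 < applyMoves μ β i → upAt i (applyMoves μ β) ∈ B) :
    IsBorelSet n r
      ((B ∪ (fun μ => applyMoves μ β) '' MovesFam j α B) \
        ((fun μ => applyMoves μ α) '' MovesFam j α B)) ∧
    ∀ i, (((B ∪ (fun μ => applyMoves μ β) '' MovesFam j α B) \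
        ((fun μ => applyMoves μ α) '' MovesFam j α B)) ∩
          {γ | ∀ k, k < i → γ k = 0}).ncard
        = (B ∩ {γ | ∀ k, k < i → γ k = 0}).ncard :=
  stmt_8_general n r j B hB α β hαB hα0 hαj hαmin hβmon hβB hβ0 hβj h1 h2
end

section
/- Let B ⊆ P(n,r) be a Borel set, x^α a minimal element of B_j = B ∩ P(n−j,r) with min x^α = j, 𝔉_α the family of admissible compositions of decreasing moves with indices ≤ j fixing x^α inside B (plus the identity), and C = B \ 𝔉_α(x^α). Then for every F ∈ 𝔉_α and every i > j, the monomial x_i · F(x^α) lies in the ideal generated by C. -/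
open Finset

lemma chainUp (n r : ℕ) (B : Set (ℕ → ℕ)) (hB : IsBorelSet n r B) :
    ∀ d (β : ℕ → ℕ), β ∈ B → ∀ m, 0 < β m → m + d + 1 ≤ n →
      (fun k => if k = m then β m - 1 else if k = m + d + 1 then β (m + d + 1) + 1 else β k) ∈ B := by
  intro d
  induction d with
  | zero =>
    intro β hβ m hm hle
    have h := hB.2 β hβ (upAt m β) ⟨m, by omega, hm, rfl⟩
    have e : (fun k => if k = m then β m - 1 else if k = m + 0 + 1 then β (m + 0 + 1) + 1 else β k)
        = upAt m β := by
      funext k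
      simp only [upAt, Nat.add_zero]
    rw [e]; exact h
  | succ d ih =>
    intro β hβ m hm hle
    have hβ' : upAt m β ∈ B := hB.2 β hβ _ ⟨m, by omega, hm, rfl⟩
    have h1 : 0 < upAt m β (m+1) := by simp [upAt]
    have h2 : (m+1) + d + 1 ≤ n := by omega
    have h := ih (upAt m β) hβ' (m+1) h1 h2
    have harr : m + (d + 1) + 1 = m + 1 + d + 1 := by omega
    have e : (fun k => if k = m then β m - 1 else
          if k = m + (d+1) + 1 then β (m + (d+1) + 1) + 1 else β k)
        = (fun k => if k = m + 1 then upAt m β (m+1) - 1 else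
          if k = m + 1 + d + 1 then upAt m β (m + 1 + d + 1) + 1 else upAt m β k) := by
      funext k
      have e1 : upAt m β (m+1) = β (m+1) + 1 := by simp [upAt]
      have e2 : upAt m β (m+1+d+1) = β (m+1+d+1) := by
        simp only [upAt, if_neg (show ¬ m+1+d+1 = m by omega),
          if_neg (show ¬ m+1+d+1 = m+1 by omega)]
      by_cases hk1 : k = m
      · subst hk1
        rw [if_pos rfl, if_neg (by omega), if_neg (by omega)]
        simp [upAt]
      · by_cases hk2 : k = m + 1
        · subst hk2
          rw [if_neg hk1, if_neg (by omega), if_pos rfl, e1]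
          omega
        · by_cases hk3 : k = m + (d+1) + 1
          · subst hk3
            rw [if_neg hk1, if_pos rfl, if_neg hk2, if_pos harr, harr, e2]
          · rw [if_neg hk1, if_neg hk3, if_neg hk2, if_neg (by omega)]
            simp only [upAt, if_neg hk1, if_neg hk2]
    rw [e]; exact h

/-- for every move F in the family and every i > j, the monomial
x_i · F(x^α) lies in the monomial ideal generated by C = B \ F_α(x^α). -/
theorem stmt_9 (n r j : ℕ) (B : Set (ℕ → ℕ)) (hB : IsBorelSet n r B)
    (α : ℕ → ℕ) (hαB : α ∈ B) (hα0 : ∀ k, k < j → α k = 0) (hαj : α j ≠ 0)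
    (hαmin : ∀ i, j < i → i ≤ n → 0 < α i → downAt i α ∉ B) :
    ∀ μ ∈ MovesFam j α B, ∀ i, j < i → i ≤ n →
      ∃ γ ∈ B \ ((fun ν => applyMoves ν α) '' MovesFam j α B), ∃ k, k ≤ n ∧
        addVar i (applyMoves μ α) = addVar k γ := by
  intro μ hμ i hji hin
  obtain ⟨hsupp, hadm, hβB⟩ := hμ
  set β := applyMoves μ α with hβdef
  have hμ0 : ∀ l, j < l → μ l = 0 := by
    intro l hl
    by_contra h
    exact absurd (hsupp l h).2 (by omega)
  have hμz : μ 0 = 0 := by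
    by_contra h
    exact absurd (hsupp 0 h).1 (by omega)
  have key : ∀ k, β k + μ k = α k + μ (k+1) := by
    intro k
    have := hadm k
    simp only [hβdef, applyMoves]
    omega
  -- telescoping sum
  have hsum : ∑ k ∈ Finset.range (j+1), β k = ∑ k ∈ Finset.range (j+1), α k := by
    have h1 : ∑ k ∈ Finset.range (j+1), (β k + μ k)
        = ∑ k ∈ Finset.range (j+1), (α k + μ (k+1)) :=
      Finset.sum_congr rfl fun k _ => key k
    rw [Finset.sum_add_distrib, Finset.sum_add_distrib] at h1
    have h2 : ∑ k ∈ Finset.range (j+1), μ (k+1) = ∑ k ∈ Finset.range (j+1), μ k := by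
      have h3 : ∑ k ∈ Finset.range (j+2), μ k
          = (∑ k ∈ Finset.range (j+1), μ (k+1)) + μ 0 := Finset.sum_range_succ' μ (j+1)
      have h4 : ∑ k ∈ Finset.range (j+2), μ k
          = (∑ k ∈ Finset.range (j+1), μ k) + μ (j+1) := Finset.sum_range_succ μ (j+1)
      have h5 : μ (j+1) = 0 := hμ0 _ (by omega)
      omega
    omega
  have hpos : 0 < ∑ k ∈ Finset.range (j+1), β k := by
    rw [hsum]
    calc 0 < α j := Nat.pos_of_ne_zero hαj
    _ ≤ _ := Finset.single_le_sum (f := α) (fun k _ => Nat.zero_le _)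
        (Finset.self_mem_range_succ j)
  obtain ⟨m, hmmem, hm⟩ : ∃ m ∈ Finset.range (j+1), β m ≠ 0 := by
    by_contra h
    push_neg at h
    rw [Finset.sum_eq_zero h] at hpos
    exact Nat.lt_irrefl 0 hpos
  have hmj : m ≤ j := by
    have := Finset.mem_range.mp hmmem; omega
  have hmi : m < i := by omega
  set γ : ℕ → ℕ := fun k => if k = m then β m - 1 else if k = i then β i + 1 else β k with hγdef
  have hγB : γ ∈ B := by
    obtain ⟨d, rfl⟩ : ∃ d, i = m + d + 1 := ⟨i - m - 1, by omega⟩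
    exact chainUp n r B hB d β hβB m (Nat.pos_of_ne_zero hm) hin
  have hβi : β i = α i := by
    have := key i
    have h1 : μ i = 0 := hμ0 i hji
    have h2 : μ (i+1) = 0 := hμ0 (i+1) (by omega)
    omega
  have hγnot : γ ∉ (fun ν => applyMoves ν α) '' MovesFam j α B := by
    rintro ⟨ν, ⟨hνsupp, hνadm, hνB⟩, hγν⟩
    have hν0 : ν i = 0 := by
      by_contra h; exact absurd (hνsupp i h).2 (by omega)
    have hν1 : ν (i+1) = 0 := by
      by_contra h; exact absurd (hνsupp (i+1) h).2 (by omega)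
    have hcf := congrFun hγν i
    simp [applyMoves, hν0, hν1, hγdef, show ¬ i = m by omega] at hcf
    omega
  refine ⟨γ, ⟨hγB, hγnot⟩, m, by omega, ?_⟩
  funext k
  simp only [addVar]
  by_cases h1 : k = m
  · subst h1
    simp only [hγdef]
    split_ifs <;> omega
  · by_cases h2 : k = i
    · subst h2
      simp only [hγdef]
      split_ifs <;> omega
    · simp only [hγdef]
      split_ifs <;> omega
end

section
/- Let B ⊆ P(n,r) be a Borel set, x^α a minimal element of B_j with min x^α = j, 𝔉_α the associated family of admissible decreasing-move compositions with indices ≤ j, and C = B \ 𝔉_α(x^α). Then for every F ∈ 𝔉_α and every i ≤ j, the monomial x_i · F(x^α) does NOT lie in the monomial ideal generated by C; moreover, the set {x_i · F(x^α) : F ∈ 𝔉_α, 0 ≤ i ≤ min F(x^α)} is exactly a monomial basis of the degree-(r+1) part of the ideal ⟨x_0,…,x_j⟩ · ⟨𝔉_α(x^α)⟩. -/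
open Finset

def psum (γ : ℕ → ℕ) (t : ℕ) : ℕ := ∑ l ∈ Finset.range (t + 1), γ l

lemma psum_zero (γ : ℕ → ℕ) : psum γ 0 = γ 0 := by simp [psum]

lemma psum_succ (γ : ℕ → ℕ) (t : ℕ) : psum γ (t + 1) = psum γ t + γ (t + 1) :=
  Finset.sum_range_succ γ (t + 1)

lemma psum_mono (γ : ℕ → ℕ) {s t : ℕ} (h : s ≤ t) : psum γ s ≤ psum γ t :=
  Finset.sum_le_sum_of_subset (Finset.range_subset_range.2 (by omega))

lemma eq_of_psum_eq {γ δ : ℕ → ℕ} (h : ∀ t, psum γ t = psum δ t) : γ = δ := by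
  funext l
  cases l with
  | zero => have := h 0; rw [psum_zero, psum_zero] at this; exact this
  | succ t =>
      have h1 := h t
      have h2 := h (t + 1)
      rw [psum_succ, psum_succ] at h2
      omega

lemma psum_ind (a t : ℕ) :
    (∑ l ∈ Finset.range (t + 1), if l = a then 1 else 0) = if a ≤ t then 1 else 0 := by
  simp [Finset.sum_ite_eq', Nat.lt_succ_iff]

lemma psum_shift {f g : ℕ → ℕ} {a b : ℕ}
    (h : ∀ l, f l + (if l = a then 1 else 0) = g l + (if l = b then 1 else 0)) (t : ℕ) :
    psum f t + (if a ≤ t then 1 else 0) = psum g t + (if b ≤ t then 1 else 0) := by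
  have h2 := Finset.sum_congr rfl (fun l (_ : l ∈ Finset.range (t + 1)) => h l)
  simpa [Finset.sum_add_distrib, psum, psum_ind, Nat.lt_succ_iff] using h2

lemma upReach_aux (n : ℕ) (B : Set (ℕ → ℕ))
    (hB : ∀ γ ∈ B, ∀ δ, UpStep n γ δ → δ ∈ B) :
    ∀ M (γ : ℕ → ℕ), γ ∈ B → ∀ δ : ℕ → ℕ, (∀ t, psum δ t ≤ psum γ t) →
      (∀ t, n ≤ t → psum γ t ≤ psum δ t) →
      (∑ t ∈ Finset.range n, (psum γ t - psum δ t)) ≤ M → δ ∈ B := by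
  intro M
  induction M with
  | zero =>
    intro γ hγ δ hdom heq hM
    have hall : ∀ t, psum γ t = psum δ t := by
      intro t
      rcases Nat.lt_or_ge t n with ht | ht
      · have h0 := Finset.sum_eq_zero_iff.mp (Nat.le_zero.mp hM) t (Finset.mem_range.mpr ht)
        have := hdom t
        omega
      · exact le_antisymm (heq t ht) (hdom t)
    exact (eq_of_psum_eq hall) ▸ hγ
  | succ M ih =>
    intro γ hγ δ hdom heq hM
    by_cases hstr : ∃ t, psum δ t < psum γ t
    · have hfind := Nat.find_spec hstr
      set t₀ := Nat.find hstr with ht₀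
      have ht₀n : t₀ < n := by
        by_contra h
        have := heq t₀ (by omega)
        omega
      have hγpos : 0 < γ t₀ := by
        rcases Nat.eq_zero_or_pos t₀ with h0 | hpos
        · rw [h0] at hfind ⊢
          rw [psum_zero, psum_zero] at hfind
          omega
        · obtain ⟨s, hs⟩ : ∃ s, t₀ = s + 1 := ⟨t₀ - 1, by omega⟩
          have hmin : ¬ (psum δ s < psum γ s) := Nat.find_min hstr (by omega)
          have h1 := hdom s
          have h2 := psum_mono δ (by omega : s ≤ s + 1)
          have h3 := psum_succ γ s
          rw [hs] at hfind ⊢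
          omega
      set γ' := upAt t₀ γ with hγ'def
      have hpt : ∀ l, γ' l + (if l = t₀ then 1 else 0) = γ l + (if l = t₀ + 1 then 1 else 0) := by
        intro l
        rcases eq_or_ne l t₀ with h | h1
        · subst h
          simp [hγ'def, upAt]
          omega
        · rcases eq_or_ne l (t₀ + 1) with h2 | h2
          · subst h2
            simp [hγ'def, upAt, h1]
          · simp [hγ'def, upAt, h1, h2]
      have hps := psum_shift hpt
      have hkey : psum γ' t₀ + 1 = psum γ t₀ := by
        have h2 := hps t₀
        rw [if_pos le_rfl, if_neg (by omega : ¬ t₀ + 1 ≤ t₀)] at h2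
        omega
      have hle' : ∀ t, psum γ' t ≤ psum γ t := by
        intro t
        rcases eq_or_ne t t₀ with h | hne
        · rw [h]; omega
        · have h2 := hps t
          split_ifs at h2 <;> omega
      have hγ'B : γ' ∈ B := hB γ hγ γ' ⟨t₀, ht₀n, hγpos, hγ'def⟩
      refine ih γ' hγ'B δ ?_ ?_ ?_
      · intro t
        rcases eq_or_ne t t₀ with h | hne
        · rw [h]; omega
        · have h2 := hps t
          have := hdom t
          split_ifs at h2 <;> omega
      · intro t ht
        have h2 := hps t
        have := heq t ht
        split_ifs at h2 <;> omega
      · have hsum : ∑ t ∈ Finset.range n, (psum γ' t - psum δ t)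
            < ∑ t ∈ Finset.range n, (psum γ t - psum δ t) := by
          apply Finset.sum_lt_sum
          · intro t _
            exact Nat.sub_le_sub_right (hle' t) _
          · exact ⟨t₀, Finset.mem_range.mpr ht₀n, by omega⟩
        omega
    · push_neg at hstr
      have heqfn : γ = δ := eq_of_psum_eq fun t => le_antisymm (hstr t) (hdom t)
      exact heqfn ▸ hγ

lemma upReach (n : ℕ) (B : Set (ℕ → ℕ))
    (hB : ∀ γ ∈ B, ∀ δ, UpStep n γ δ → δ ∈ B)
    (γ : ℕ → ℕ) (hγ : γ ∈ B) (δ : ℕ → ℕ)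
    (hdom : ∀ t, psum δ t ≤ psum γ t) (heq : ∀ t, n ≤ t → psum γ t ≤ psum δ t) : δ ∈ B :=
  upReach_aux n B hB _ γ hγ δ hdom heq le_rfl

lemma psum_applyMoves (μ α : ℕ → ℕ) (h0 : μ 0 = 0) (hadm : AdmissibleOn μ α) :
    ∀ t, psum (applyMoves μ α) t = psum α t + μ (t + 1) := by
  intro t
  induction t with
  | zero =>
    have := hadm 0
    rw [psum_zero, psum_zero]
    simp only [applyMoves]
    omega
  | succ t ih =>
    have := hadm (t + 1)
    rw [psum_succ, psum_succ, ih]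
    simp only [applyMoves]
    omega

lemma imageChar (j : ℕ) (B : Set (ℕ → ℕ)) (α γ : ℕ → ℕ) :
    γ ∈ (fun ν => applyMoves ν α) '' MovesFam j α B ↔
      γ ∈ B ∧ (∀ t, psum α t ≤ psum γ t) ∧ (∀ t, j ≤ t → psum γ t = psum α t) := by
  constructor
  · rintro ⟨μ, ⟨hsupp, hadm, hmem⟩, rfl⟩
    have h0 : μ 0 = 0 := by
      by_contra h
      exact absurd (hsupp 0 h).1 (by omega)
    have hp := psum_applyMoves μ α h0 hadm
    refine ⟨hmem, fun t => by rw [hp]; omega, fun t ht => ?_⟩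
    have hz : μ (t + 1) = 0 := by
      by_contra h
      exact absurd (hsupp (t + 1) h).2 (by omega)
    rw [hp, hz]
    omega
  · rintro ⟨hγB, hle, hj⟩
    set μ : ℕ → ℕ := fun l => if l = 0 then 0 else psum γ (l - 1) - psum α (l - 1) with hμdef
    have happ : applyMoves μ α = γ := by
      funext l
      cases l with
      | zero =>
        have h1 := hle 0
        rw [psum_zero, psum_zero] at h1
        simp only [applyMoves, hμdef]
        norm_num
        rw [psum_zero, psum_zero]
        omega
      | succ t =>
        have h1 := hle t
        have h2 := hle (t + 1)
        have e1 := psum_succ α t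
        have e2 := psum_succ γ t
        simp only [applyMoves, hμdef, Nat.add_sub_cancel]
        norm_num
        omega
    refine ⟨μ, ⟨?_, ?_, ?_⟩, happ⟩
    · intro l hl
      cases l with
      | zero => simp [hμdef] at hl
      | succ t =>
        refine ⟨by omega, ?_⟩
        by_contra h
        have hz := hj t (by omega)
        simp only [hμdef, Nat.add_sub_cancel] at hl
        norm_num at hl
        omega
    · intro l
      cases l with
      | zero => simp [hμdef]
      | succ t =>
        have h1 := hle t
        have h2 := hle (t + 1)
        have e1 := psum_succ α t
        have e2 := psum_succ γ t
        simp only [hμdef, Nat.add_sub_cancel]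
        norm_num
        omega
    · rw [happ]; exact hγB


lemma minIdx_zero_of_lt {γ : ℕ → ℕ} {k : ℕ} (h : k < minIdx γ) : γ k = 0 := by
  by_contra h'
  have hle : minIdx γ ≤ k := Nat.sInf_le (show k ∈ {k | γ k ≠ 0} from h')
  omega

/-- for i ≤ j the monomials x_i · F(x^α) do not lie in the monomial ideal
generated by C = B \ F_α(x^α); moreover the monomials x_i · F(x^α) with
i ≤ min F(x^α) form exactly a monomial basis of the degree-(r+1) part of
(x_0,…,x_j)·(F_α(x^α)). -/
theorem stmt_10 (n r j : ℕ) (B : Set (ℕ → ℕ)) (hB : IsBorelSet n r B)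
    (α : ℕ → ℕ) (hαB : α ∈ B) (hα0 : ∀ k, k < j → α k = 0) (hαj : α j ≠ 0)
    (hαmin : ∀ i, j < i → i ≤ n → 0 < α i → downAt i α ∉ B) :
    (∀ μ ∈ MovesFam j α B, ∀ i, i ≤ j →
      ¬ ∃ γ ∈ B \ ((fun ν => applyMoves ν α) '' MovesFam j α B), ∃ k, k ≤ n ∧
        addVar i (applyMoves μ α) = addVar k γ) ∧
    ({δ | ∃ μ ∈ MovesFam j α B, ∃ i, i ≤ minIdx (applyMoves μ α) ∧
        δ = addVar i (applyMoves μ α)}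
      = {δ | ∃ μ ∈ MovesFam j α B, ∃ i, i ≤ j ∧ δ = addVar i (applyMoves μ α)}) ∧
    (∀ μ ∈ MovesFam j α B, ∀ μ' ∈ MovesFam j α B, ∀ i i',
      i ≤ minIdx (applyMoves μ α) → i' ≤ minIdx (applyMoves μ' α) →
      addVar i (applyMoves μ α) = addVar i' (applyMoves μ' α) →
      applyMoves μ α = applyMoves μ' α ∧ i = i') := by
  obtain ⟨hsub, hup⟩ := hB
  have hjn : j ≤ n := by
    by_contra h
    exact hαj ((hsub hαB).1 j (by omega))
  have hα0sum : ∀ t, t < j → psum α t = 0 := by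
    intro t ht
    exact Finset.sum_eq_zero fun l hl => hα0 l (by have := Finset.mem_range.mp hl; omega)
  have hαjsum : 0 < psum α j := by
    have h1 : α j ≤ psum α j :=
      Finset.single_le_sum (fun i _ => Nat.zero_le _) (Finset.mem_range.mpr (by omega))
    omega
  have hfam : ∀ μ ∈ MovesFam j α B, applyMoves μ α ∈ B ∧
      (∀ t, psum α t ≤ psum (applyMoves μ α) t) ∧
      (∀ t, j ≤ t → psum (applyMoves μ α) t = psum α t) := by
    intro μ hμ
    exact (imageChar j B α (applyMoves μ α)).mp ⟨μ, hμ, rfl⟩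
  have hminle : ∀ μ ∈ MovesFam j α B, minIdx (applyMoves μ α) ≤ j := by
    intro μ hμ
    obtain ⟨hβB, hβle, hβeq⟩ := hfam μ hμ
    by_contra h
    have hz : psum (applyMoves μ α) j = 0 :=
      Finset.sum_eq_zero fun l hl =>
        minIdx_zero_of_lt (by have := Finset.mem_range.mp hl; omega)
    have := hβle j
    omega
  refine ⟨?_, ?_, ?_⟩
  · -- Part 1
    intro μ hμ i hij
    rintro ⟨γ, ⟨hγB, hγnot⟩, k, hkn, heqv⟩
    obtain ⟨hβB, hβle, hβeq⟩ := hfam μ hμ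
    set β := applyMoves μ α with hβ
    have hpt : ∀ l, β l + (if l = i then 1 else 0) = γ l + (if l = k then 1 else 0) := by
      intro l
      have h := congrFun heqv l
      simp only [addVar] at h
      split_ifs at h ⊢ <;> omega
    have hps := psum_shift hpt
    by_cases hkj : k ≤ j
    · apply hγnot
      rw [imageChar]
      refine ⟨hγB, ?_, ?_⟩
      · intro t
        have h2 := hps t
        by_cases ht : t < j
        · have := hα0sum t ht
          omega
        · have h5 := hβeq t (by omega)
          split_ifs at h2 <;> omega
      · intro t ht
        have h2 := hps t
        have h5 := hβeq t ht
        split_ifs at h2 <;> omega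
    · push_neg at hkj
      have hik : i ≠ k := by omega
      have hβk : β k = γ k + 1 := by
        have h := hpt k
        simp [Ne.symm hik] at h
        omega
      obtain ⟨m, rfl⟩ : ∃ m, k = m + 1 := ⟨k - 1, by omega⟩
      have hαk : α (m + 1) = β (m + 1) := by
        have e1 := psum_succ α m
        have e2 := psum_succ β m
        have e3 := hβeq m (by omega)
        have e4 := hβeq (m + 1) (by omega)
        omega
      have hαkpos : 0 < α (m + 1) := by omega
      set δ := downAt (m + 1) α with hδ
      have hpt2 : ∀ l, δ l + (if l = m + 1 then 1 else 0) = α l + (if l = m then 1 else 0) := by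
        intro l
        rcases eq_or_ne l (m + 1) with h | h1
        · subst h
          simp [hδ, downAt, (by omega : m + 1 ≠ m)]
          omega
        · rcases eq_or_ne l m with h | h2
          · subst h
            simp [hδ, downAt, h1]
          · simp [hδ, downAt, h1, h2]
      have hps2 := psum_shift hpt2
      have hδB : δ ∈ B := by
        apply upReach n B hup γ hγB δ
        · intro t
          have h2 := hps t
          have h3 := hps2 t
          by_cases ht : t < j
          · have h4 := hα0sum t ht
            split_ifs at h2 h3 <;> omega
          · have h5 := hβeq t (by omega)
            split_ifs at h2 h3 <;> omega
        · intro t ht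
          have h2 := hps t
          have h3 := hps2 t
          have h5 := hβeq t (by omega)
          split_ifs at h2 h3 <;> omega
      exact hαmin (m + 1) (by omega) hkn hαkpos hδB
  · -- Part 2
    ext δ
    simp only [Set.mem_setOf_eq]
    constructor
    · rintro ⟨μ, hμ, i, him, rfl⟩
      exact ⟨μ, hμ, i, le_trans him (hminle μ hμ), rfl⟩
    · rintro ⟨μ, hμ, i, hij, rfl⟩
      obtain ⟨hβB, hβle, hβeq⟩ := hfam μ hμ
      set β := applyMoves μ α with hβ
      by_cases him : i ≤ minIdx β
      · exact ⟨μ, hμ, i, him, rfl⟩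
      push_neg at him
      set m := minIdx β with hm
      have hmj : m ≤ j := hminle μ hμ
      have hne : {k | β k ≠ 0}.Nonempty := by
        rcases Set.eq_empty_or_nonempty {k | β k ≠ 0} with h | h
        · exfalso
          have hz : psum β j = 0 := Finset.sum_eq_zero fun l _ => by
            by_contra hl
            exact Set.eq_empty_iff_forall_notMem.mp h l hl
          have := hβle j
          omega
        · exact h
      have hβm : β m ≠ 0 := Nat.sInf_mem hne
      have hmi : m ≠ i := by omega
      set β' : ℕ → ℕ := fun l => if l = m then β m - 1 else if l = i then β l + 1 else β l
        with hβ'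
      have hpt : ∀ l, β' l + (if l = m then 1 else 0) = β l + (if l = i then 1 else 0) := by
        intro l
        rcases eq_or_ne l m with h | h1
        · subst h
          simp [hβ', hmi]
          omega
        · rcases eq_or_ne l i with h | h2
          · subst h
            simp [hβ', h1]
          · simp [hβ', h1, h2]
      have hps := psum_shift hpt
      have hβ'B : β' ∈ B := by
        apply upReach n B hup β hβB β'
        · intro t
          have h2 := hps t
          split_ifs at h2 <;> omega
        · intro t ht
          have h2 := hps t
          split_ifs at h2 <;> omega
      have hβ'img : β' ∈ (fun ν => applyMoves ν α) '' MovesFam j α B := by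
        rw [imageChar]
        refine ⟨hβ'B, ?_, ?_⟩
        · intro t
          have h2 := hps t
          by_cases ht : t < j
          · have := hα0sum t ht
            omega
          · have h5 := hβeq t (by omega)
            have := hβle t
            split_ifs at h2 <;> omega
        · intro t ht
          have h2 := hps t
          have h5 := hβeq t ht
          split_ifs at h2 <;> omega
      obtain ⟨μ', hμ', hβ'eq⟩ := hβ'img
      have hbe : applyMoves μ' α = β' := hβ'eq
      refine ⟨μ', hμ', m, ?_, ?_⟩
      · have hlow : ∀ l, β' l ≠ 0 → m ≤ l := by
          intro l hl
          by_contra h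
          push_neg at h
          have hz : β l = 0 := minIdx_zero_of_lt (show l < minIdx β by omega)
          have h1 : l ≠ m := by omega
          have h2 : l ≠ i := by omega
          simp [hβ', h1, h2] at hl
          exact hl hz
        have hne' : {k | β' k ≠ 0}.Nonempty := ⟨i, by simp [hβ', Ne.symm hmi]⟩
        rw [hbe]
        exact hlow _ (Nat.sInf_mem hne')
      · rw [hbe]
        funext l
        have h2 := hpt l
        simp only [addVar]
        split_ifs at h2 ⊢ <;> omega
  · -- Part 3
    intro μ hμ μ' hμ' i i' hi hi' heqv
    have hii' : i = i' := by
      by_contra hne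
      rcases Nat.lt_or_ge i i' with h | h
      · have hz : applyMoves μ' α i = 0 := minIdx_zero_of_lt (lt_of_lt_of_le h hi')
        have hc := congrFun heqv i
        simp [addVar, hne] at hc
        omega
      · have h' : i' < i := by omega
        have hz : applyMoves μ α i' = 0 := minIdx_zero_of_lt (lt_of_lt_of_le h' hi)
        have hc := congrFun heqv i'
        simp [addVar, Ne.symm hne] at hc
        omega
    subst hii'
    refine ⟨?_, rfl⟩
    funext l
    have hc := congrFun heqv l
    simp only [addVar] at hc
    split_ifs at hc <;> omega
end

section
/- Let I ⊂ K[x_0,…,x_n] be a saturated Borel-fixed ideal defining d points in ℙⁿ (constant Hilbert polynomial d), and let s be its Castelnuovo–Mumford regularity. Then x_1^s x_0^{d−s} ∈ I_d and x_1^{s−1} x_0^{d−s+1} ∉ I_d; equivalently, among the degree-d monomials outside I that are pure in x_0 and x_1, exactly the monomials x_0^d, x_1 x_0^{d−1}, …, x_1^{s−1} x_0^{d−s+1} occur. -/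
open Finset

/-!
Saturation with respect to `x_0` makes membership of `x_0^a x_1^b` in `I` independent of `a`, so
the pure monomials of `I` in `x_0, x_1` are exactly those with `b ≥ b₀`, where `b₀` is the least
exponent with `x_1^{b₀} ∈ I`; such a `b₀` exists because in high degree only `d` monomials lie
outside `I`. Since `x_1^{b₀}` is a minimal generator, `b₀ ≤ s`. Conversely, strong stability
turns `x_1^{b₀} ∈ I` into: every monomial of degree `≥ b₀` not involving `x_0` lies in `I`.
A minimal generator does not involve `x_0` (saturation), so dividing it by any of its variables
leaves `I` only if its degree is at most `b₀`; hence `s = b₀`.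
-/

def totalDeg (n : ℕ) (α : ℕ → ℕ) : ℕ := ∑ i ∈ range (n + 1), α i

/-- `x_j x^α / x_i`, the move in the definition of `StronglyStable`. -/
def moveVar (i j : ℕ) (α : ℕ → ℕ) : ℕ → ℕ :=
  fun k => if k = i then α i - 1 else if k = j then α j + 1 else α k

/-- The monomial `x_0^a x_1^b`; note `pure01 d k = mon01 (d - k) k` by definition. -/
def mon01 (a b : ℕ) : ℕ → ℕ := fun m => if m = 1 then b else if m = 0 then a else 0

section ExponentVectors

variable {n i j : ℕ} {α : ℕ → ℕ}

theorem addVar_eq_add_single (i : ℕ) (α : ℕ → ℕ) : addVar i α = α + Pi.single i 1 := by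
  funext k
  by_cases hk : k = i
  · subst hk; simp [addVar]
  · simp [addVar, hk]

theorem totalDeg_addVar (hi : i ≤ n) : totalDeg n (addVar i α) = totalDeg n α + 1 := by
  simp [totalDeg, addVar_eq_add_single, sum_add_distrib, sum_pi_single', Nat.lt_succ_iff.mpr hi]

theorem addVar_subVar (h : 0 < α i) : addVar i (subVar i α) = α := by
  funext k
  by_cases hk : k = i
  · subst hk; simp [addVar, subVar]; omega
  · simp [addVar, subVar, hk]

theorem subVar_addVar (i : ℕ) (α : ℕ → ℕ) : subVar i (addVar i α) = α := by
  funext k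
  by_cases hk : k = i <;> simp [addVar, subVar, hk]

theorem totalDeg_subVar (hi : i ≤ n) (h : 0 < α i) :
    totalDeg n (subVar i α) + 1 = totalDeg n α := by
  rw [← totalDeg_addVar hi, addVar_subVar h]

theorem moveVar_eq_addVar_subVar (hij : i ≠ j) : moveVar i j α = addVar j (subVar i α) := by
  funext k
  by_cases hj : k = j
  · subst hj; simp [moveVar, addVar, subVar, Ne.symm hij]
  · by_cases hi : k = i <;> simp [moveVar, addVar, subVar, hi, hj, hij]

theorem totalDeg_moveVar (hi : i ≤ n) (hj : j ≤ n) (hij : i ≠ j) (h : 0 < α i) :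
    totalDeg n (moveVar i j α) = totalDeg n α := by
  rw [moveVar_eq_addVar_subVar hij, totalDeg_addVar hj, totalDeg_subVar hi h]

theorem moveVar_moveVar (hij : i ≠ j) (h : 0 < α i) : moveVar j i (moveVar i j α) = α := by
  funext k
  by_cases hj : k = j
  · subst hj; simp [moveVar, Ne.symm hij]
  · by_cases hi : k = i
    · subst hi; simp [moveVar, hij]; omega
    · simp [moveVar, hi, hj]

theorem finite_Mon (n t : ℕ) : (Mon n t).Finite := by
  refine (Set.finite_range fun f : Fin (n + 1) → Fin (t + 1) =>
    fun m => if h : m < n + 1 then (f ⟨m, h⟩ : ℕ) else 0).subset fun α hα => ?_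
  have hle : ∀ i < n + 1, α i ≤ t := fun i hi =>
    hα.2 ▸ single_le_sum (fun j _ => Nat.zero_le (α j)) (mem_range.mpr hi)
  refine ⟨fun i => ⟨α i, Nat.lt_succ_of_le (hle i i.2)⟩, funext fun m => ?_⟩
  by_cases h : m < n + 1
  · simp [h]
  · simp [h, hα.1 m (by omega)]

end ExponentVectors

section PureMonomials

variable {n : ℕ}

theorem mon01_zero_zero : mon01 0 0 = 0 := by
  funext m
  simp [mon01]

theorem mon01_succ_left (a b : ℕ) : mon01 (a + 1) b = addVar 0 (mon01 a b) := by
  funext m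
  by_cases h : m = 0
  · subst h; simp [mon01, addVar]
  · simp [mon01, addVar, h]

theorem mon01_succ_right (a b : ℕ) : mon01 a (b + 1) = addVar 1 (mon01 a b) := by
  funext m
  by_cases h : m = 1
  · subst h; simp [mon01, addVar]
  · simp [mon01, addVar, h]

theorem totalDeg_mon01 (hn : 1 ≤ n) (a b : ℕ) : totalDeg n (mon01 a b) = a + b := by
  induction a with
  | zero =>
    induction b with
    | zero => simp [totalDeg, mon01_zero_zero]
    | succ b ih => rw [mon01_succ_right, totalDeg_addVar hn, ih]; ring
  | succ a ih => rw [mon01_succ_left, totalDeg_addVar (Nat.zero_le n), ih]; ring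

theorem mon01_mem_Mon (hn : 1 ≤ n) (a b : ℕ) : mon01 a b ∈ Mon n (a + b) :=
  ⟨fun k hk => by simp [mon01, show k ≠ 0 by omega, show k ≠ 1 by omega],
    totalDeg_mon01 hn a b⟩

theorem eq_mon01_of_support {β : ℕ → ℕ} (h0 : β 0 = 0) (hsupp : ∀ k, n < k → β k = 0)
    (hmid : ∀ k, 2 ≤ k → k ≤ n → β k = 0) : β = mon01 0 (β 1) := by
  funext m
  by_cases h1 : m = 1
  · simp [mon01, h1]
  · by_cases hm0 : m = 0
    · simp [mon01, hm0, h0]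
    · simp only [mon01, h1, hm0, if_false]
      by_cases hmn : m ≤ n
      · exact hmid m (by omega) hmn
      · exact hsupp m (by omega)

end PureMonomials

section MonomialIdeal

variable {n : ℕ} {S : Set (ℕ → ℕ)}

theorem mon01_mem_of_saturated (hsat : ∀ α, addVar 0 α ∈ S → α ∈ S) {a b : ℕ}
    (h : mon01 a b ∈ S) : mon01 0 b ∈ S := by
  induction a with
  | zero => exact h
  | succ a ih => exact ih (hsat _ (mon01_succ_left a b ▸ h))

theorem mon01_mem_mono (hn : 1 ≤ n) (hideal : ∀ α ∈ S, ∀ k, k ≤ n → addVar k α ∈ S)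
    {a b a' b' : ℕ} (h : mon01 a b ∈ S) (ha : a ≤ a') (hb : b ≤ b') : mon01 a' b' ∈ S := by
  induction a', ha using Nat.le_induction with
  | base =>
    induction b', hb using Nat.le_induction with
    | base => exact h
    | succ b' _ ih => rw [mon01_succ_right]; exact hideal _ ih 1 hn
  | succ a' _ ih => rw [mon01_succ_left]; exact hideal _ ih 0 (Nat.zero_le n)

theorem succ_le_ncard_Mon_diff (hn : 1 ≤ n) (hsat : ∀ α, addVar 0 α ∈ S → α ∈ S)
    (hnone : ∀ b, mon01 0 b ∉ S) (t : ℕ) : t + 1 ≤ (Mon n t \ S).ncard := by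
  have hmaps : ∀ b ∈ (range (t + 1) : Set ℕ), mon01 (t - b) b ∈ Mon n t \ S := by
    intro b hb
    have hbt : t - b + b = t := Nat.sub_add_cancel (by simpa [Nat.lt_succ_iff] using hb)
    have hmon := mon01_mem_Mon hn (t - b) b
    rw [hbt] at hmon
    exact ⟨hmon, fun h => hnone b (mon01_mem_of_saturated hsat h)⟩
  have hinj : Set.InjOn (fun b => mon01 (t - b) b) (range (t + 1) : Set ℕ) :=
    fun b _ c _ h => by simpa [mon01] using congrFun h 1
  simpa using Set.ncard_le_ncard_of_injOn _ hmaps hinj (finite_Mon n t).sdiff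

theorem exists_mon01_mem (hn : 1 ≤ n) (hsat : ∀ α, addVar 0 α ∈ S → α ∈ S)
    (hbdd : ∃ t, (Mon n t \ S).ncard ≤ t) : ∃ b, mon01 0 b ∈ S := by
  by_contra! hnone
  obtain ⟨t, ht⟩ := hbdd
  have := succ_le_ncard_Mon_diff hn hsat hnone t
  omega

theorem minGen_mon01 {b : ℕ} (hb : mon01 0 b ∈ S) (hmin : ∀ c < b, mon01 0 c ∉ S) :
    MinGen n S (mon01 0 b) := by
  refine ⟨hb, fun k _ hk => ?_⟩
  obtain ⟨rfl, c, rfl⟩ : k = 1 ∧ ∃ c, b = c + 1 := by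
    by_cases h1 : k = 1
    · subst h1; exact ⟨rfl, b - 1, by simp [mon01] at hk; omega⟩
    · by_cases h0 : k = 0 <;> simp [mon01, h0, h1] at hk
  rw [mon01_succ_right, subVar_addVar]
  exact hmin c (Nat.lt_succ_self c)

theorem MinGen.apply_zero_eq_zero (hsat : ∀ α, addVar 0 α ∈ S → α ∈ S) {α : ℕ → ℕ}
    (h : MinGen n S α) : α 0 = 0 := by
  by_contra h0
  have hpos := Nat.pos_of_ne_zero h0
  exact h.2 0 (Nat.zero_le n) hpos (hsat _ ((addVar_subVar hpos).symm ▸ h.1))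

theorem mem_of_mon01_mem (hn : 1 ≤ n) (hideal : ∀ α ∈ S, ∀ k, k ≤ n → addVar k α ∈ S)
    (hss : StronglyStable n S) {b : ℕ} (hb : mon01 0 b ∈ S) {β : ℕ → ℕ} (h0 : β 0 = 0)
    (hsupp : ∀ k, n < k → β k = 0) (hdeg : b ≤ totalDeg n β) : β ∈ S := by
  -- induction on the part of the degree not carried by `x_1`, trading one `x_k` for one `x_1`
  induction hw : totalDeg n β - β 1 using Nat.strong_induction_on generalizing β with
  | _ w ih =>
  by_cases hex : ∃ k, 2 ≤ k ∧ k ≤ n ∧ 0 < β k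
  · obtain ⟨k, hk2, hkn, hk⟩ := hex
    have hle : β 1 + β k ≤ totalDeg n β := by
      rw [← sum_pair (show (1 : ℕ) ≠ k by omega)]
      exact sum_le_sum_of_subset fun x hx => by simp at hx ⊢; omega
    have hdeg' := totalDeg_moveVar (α := β) hkn hn (show k ≠ 1 by omega) hk
    have hmem : moveVar k 1 β ∈ S := by
      refine ih _ ?_ ?_ (fun m hm => ?_) (hdeg' ▸ hdeg) rfl
      · rw [hdeg']; simp [moveVar, show (1 : ℕ) ≠ k by omega]; omega
      · simp [moveVar, show (0 : ℕ) ≠ k by omega, h0]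
      · simp [moveVar, show m ≠ k by omega, show m ≠ 1 by omega, hsupp m hm]
    have : moveVar 1 k (moveVar k 1 β) ∈ S :=
      hss _ hmem 1 k (by omega) hkn (by simp [moveVar, show (1 : ℕ) ≠ k by omega])
    rwa [moveVar_moveVar (show k ≠ 1 by omega) hk] at this
  · push Not at hex
    have hβ := eq_mon01_of_support h0 hsupp fun k hk2 hkn => Nat.le_zero.mp (hex k hk2 hkn)
    have hβdeg := totalDeg_mon01 hn 0 (β 1)
    rw [← hβ] at hβdeg
    rw [hβ]
    exact mon01_mem_mono hn hideal hb le_rfl (by omega)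

theorem totalDeg_le_of_minGen (hn : 1 ≤ n) (hsupp : ∀ α ∈ S, ∀ k, n < k → α k = 0)
    (hideal : ∀ α ∈ S, ∀ k, k ≤ n → addVar k α ∈ S) (hss : StronglyStable n S)
    (hsat : ∀ α, addVar 0 α ∈ S → α ∈ S) {b : ℕ} (hb : mon01 0 b ∈ S) {α : ℕ → ℕ}
    (hα : MinGen n S α) : totalDeg n α ≤ b := by
  by_contra! hlt
  obtain ⟨k, hk, hαk⟩ : ∃ k ∈ range (n + 1), α k ≠ 0 :=
    exists_ne_zero_of_sum_ne_zero (by unfold totalDeg at hlt; omega)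
  have h0 := hα.apply_zero_eq_zero hsat
  have hk0 : k ≠ 0 := by rintro rfl; exact hαk h0
  have hkn : k ≤ n := by simpa [Nat.lt_succ_iff] using hk
  have hpos := Nat.pos_of_ne_zero hαk
  refine hα.2 k hkn hpos (mem_of_mon01_mem hn hideal hss hb ?_ (fun m hm => ?_) ?_)
  · simp [subVar, Ne.symm hk0, h0]
  · simp [subVar, show m ≠ k by omega, hsupp α hα.1 m hm]
  · have := totalDeg_subVar hkn hpos; omega

end MonomialIdeal

/-- for a saturated Borel-fixed ideal of d points with regularity s,
among the degree-d monomials pure in x_0, x_1, exactly x_0^d, …, x_1^{s-1}x_0^{d-s+1}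
lie outside the ideal, i.e. x_1^k x_0^{d-k} ∈ I iff s ≤ k. -/
theorem stmt_14 (n d s : ℕ) (hn : 1 ≤ n) (S : Set (ℕ → ℕ))
    (hsupp : ∀ α ∈ S, ∀ k, n < k → α k = 0)
    (hideal : ∀ α ∈ S, ∀ k, k ≤ n → addVar k α ∈ S)
    (hss : StronglyStable n S)
    (hsat : ∀ α, addVar 0 α ∈ S → α ∈ S)
    (hHP : ∃ t0, ∀ t, t0 ≤ t → (Mon n t \ S).ncard = d)
    (hreg1 : ∀ α, MinGen n S α → ∑ i ∈ Finset.range (n + 1), α i ≤ s)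
    (hreg2 : ∃ α, MinGen n S α ∧ ∑ i ∈ Finset.range (n + 1), α i = s) :
    ∀ k, k ≤ d → (pure01 d k ∈ S ↔ s ≤ k) := by
  classical
  obtain ⟨t0, hHP⟩ := hHP
  have hpow : ∃ b, mon01 0 b ∈ S :=
    exists_mon01_mem hn hsat ⟨max t0 d, (hHP _ (le_max_left _ _)).trans_le (le_max_right _ _)⟩
  have hb := Nat.find_spec hpow
  have hs : s = Nat.find hpow := by
    obtain ⟨α, hα, rfl⟩ := hreg2
    refine le_antisymm (totalDeg_le_of_minGen hn hsupp hideal hss hsat hb hα) ?_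
    have := hreg1 _ (minGen_mon01 hb fun c hc => Nat.find_min hpow hc)
    rwa [← totalDeg, totalDeg_mon01 hn, zero_add] at this
  intro k _
  rw [hs]
  exact ⟨fun h => Nat.find_min' hpow (mon01_mem_of_saturated hsat h),
    fun h => mon01_mem_mono hn hideal hb (Nat.zero_le _) h⟩
end

section
/- Let B ⊆ P(n,r) be a Borel set with complement N, and suppose x^α is a minimal element of the sub-Borel-set B_j = B ∩ P(n−j,r), and F is a composition of decreasing elementary moves admissible on x^α with all indices ≤ j. Then for every decreasing move e⁻_i with i > j (admissible on F(x^α)), the monomial e⁻_i(F(x^α)) does not belong to B. -/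
open Finset

/-- Key lemma: if an admissible composition of decreasing moves `μ` (with indices in
`[1,n]`) sends `γ` into `B`, then `γ ∈ B`, since `B` is closed under increasing moves. -/
lemma key_undo (n : ℕ) (B : Set (ℕ → ℕ)) (hB : ∀ α ∈ B, ∀ β, UpStep n α β → β ∈ B) :
    ∀ s μ γ, (∑ l ∈ Finset.Icc 1 n, μ l) ≤ s → (∀ l, μ l ≠ 0 → 1 ≤ l ∧ l ≤ n) →
    AdmissibleOn μ γ → applyMoves μ γ ∈ B → γ ∈ B := by
  intro s
  induction s with
  | zero =>
    intro μ γ hsum hsupp hadm hmem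
    have hz : ∀ l, μ l = 0 := by
      intro l
      by_contra h
      obtain ⟨h1, h2⟩ := hsupp l h
      exact h (Finset.sum_eq_zero_iff.mp (Nat.le_zero.mp hsum) l (Finset.mem_Icc.mpr ⟨h1, h2⟩))
    have he : applyMoves μ γ = γ := by funext k; simp [applyMoves, hz]
    rwa [he] at hmem
  | succ s ih =>
    intro μ γ hsum hsupp hadm hmem
    by_cases hz : ∀ l, μ l = 0
    · have he : applyMoves μ γ = γ := by funext k; simp [applyMoves, hz]
      rwa [he] at hmem
    · push_neg at hz
      obtain ⟨l0, hl0⟩ := hz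
      have hne : {l | μ l ≠ 0}.Nonempty := ⟨l0, hl0⟩
      set l := sInf {l | μ l ≠ 0} with hldef
      have hlmem : μ l ≠ 0 := Nat.sInf_mem hne
      have hl1 : 1 ≤ l := (hsupp l hlmem).1
      have hln : l ≤ n := (hsupp l hlmem).2
      have hμlm1 : μ (l - 1) = 0 := by
        by_contra h
        have := Nat.sInf_le (show l - 1 ∈ {l | μ l ≠ 0} from h)
        omega
      set μ' : ℕ → ℕ := fun k => if k = l then μ l - 1 else μ k with hμ'
      have hμ'l : μ' l = μ l - 1 := by simp [hμ']
      have hμ'ne : ∀ k, k ≠ l → μ' k = μ k := by intro k hk; simp [hμ', hk]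
      have h1 : l - 1 + 1 = l := by omega
      have hδl1 : 0 < applyMoves μ γ (l - 1) := by
        simp only [applyMoves, h1, hμlm1]
        omega
      have heq : applyMoves μ' γ = upAt (l - 1) (applyMoves μ γ) := by
        funext k
        by_cases hk : k = l - 1
        · subst hk
          simp only [upAt, applyMoves, h1, hμ'l, hμ'ne _ (by omega : l - 1 ≠ l),
            hμlm1, if_pos rfl, ite_true, eq_self_iff_true]
          omega
        · by_cases hk2 : k = l
          · subst hk2
            have hadml := hadm l
            simp only [upAt, if_neg (show l ≠ l - 1 by omega), h1, applyMoves,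
              hμ'l, hμ'ne _ (by omega : l + 1 ≠ l), if_pos rfl, ite_true, eq_self_iff_true]
            omega
          · simp only [upAt, if_neg hk, h1, if_neg hk2, applyMoves,
              hμ'ne _ hk2, hμ'ne _ (by omega : k + 1 ≠ l)]
      have hup : UpStep n (applyMoves μ γ) (applyMoves μ' γ) :=
        ⟨l - 1, by omega, hδl1, heq⟩
      have hmem' : applyMoves μ' γ ∈ B := hB _ hmem _ hup
      have hsupp' : ∀ k, μ' k ≠ 0 → 1 ≤ k ∧ k ≤ n := by
        intro k hk
        by_cases h : k = l
        · subst h; exact ⟨hl1, hln⟩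
        · exact hsupp k (by rwa [hμ'ne _ h] at hk)
      have hadm' : AdmissibleOn μ' γ := by
        intro k
        by_cases h : k = l
        · subst h
          have := hadm l
          rw [hμ'l, hμ'ne _ (by omega : l + 1 ≠ l)]
          omega
        · by_cases h2 : k + 1 = l
          · have hk : k = l - 1 := by omega
            rw [hμ'ne _ h, hk, hμlm1]
            omega
          · rw [hμ'ne _ h, hμ'ne _ h2]
            exact hadm k
      have hsum' : (∑ l ∈ Finset.Icc 1 n, μ' l) ≤ s := by
        have hlmem' : l ∈ Finset.Icc 1 n := Finset.mem_Icc.mpr ⟨hl1, hln⟩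
        have e1 := Finset.add_sum_erase _ μ' hlmem'
        have e2 := Finset.add_sum_erase _ μ hlmem'
        have : ∑ x ∈ (Finset.Icc 1 n).erase l, μ' x = ∑ x ∈ (Finset.Icc 1 n).erase l, μ x :=
          Finset.sum_congr rfl (fun x hx => hμ'ne _ (Finset.ne_of_mem_erase hx))
        rw [this] at e1
        omega
      exact ih μ' γ hsum' hsupp' hadm' hmem'

/-- if x^α is minimal in B_j and F is an admissible composition of decreasing
moves with indices ≤ j, then any further decreasing move with index > j takes F(x^α)
outside B. -/
theorem stmt_17 (n r j : ℕ) (B : Set (ℕ → ℕ)) (hB : IsBorelSet n r B)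
    (α : ℕ → ℕ) (hαB : α ∈ B) (hα0 : ∀ k, k < j → α k = 0)
    (hαmin : ∀ i, j < i → i ≤ n → 0 < α i → downAt i α ∉ B)
    (μ : ℕ → ℕ) (hμsupp : ∀ l, μ l ≠ 0 → 1 ≤ l ∧ l ≤ j) (hμadm : AdmissibleOn μ α) :
    ∀ i, j < i → i ≤ n → 0 < applyMoves μ α i → downAt i (applyMoves μ α) ∉ B := by
  intro i hji hin hpos hmem
  have hi1 : 1 ≤ i := by omega
  have hμi : μ i = 0 := by
    by_contra h; have := hμsupp i h; omega
  have hμi1 : μ (i + 1) = 0 := by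
    by_contra h; have := hμsupp (i + 1) h; omega
  have hαi : 0 < α i := by
    have : applyMoves μ α i = α i := by simp [applyMoves, hμi, hμi1]
    omega
  set γ : ℕ → ℕ := downAt i α with hγ
  have hγi : γ i = α i - 1 := by simp [hγ, downAt]
  have hγi1 : γ (i - 1) = α (i - 1) + 1 := by
    simp [hγ, downAt, if_neg (show i - 1 ≠ i by omega)]
  have hγk : ∀ k, k ≠ i → k ≠ i - 1 → γ k = α k := by
    intro k h1 h2; simp [hγ, downAt, h1, h2]
  have hii : i - 1 + 1 = i := by omega
  have heq : downAt i (applyMoves μ α) = applyMoves μ γ := by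
    funext k
    by_cases hk : k = i
    · subst hk
      simp only [downAt, applyMoves, hγi, hμi, hμi1, if_pos rfl, ite_true, eq_self_iff_true]
      omega
    · by_cases hk2 : k = i - 1
      · subst hk2
        have hadm := hμadm (i - 1)
        rw [hii] at hadm
        simp only [downAt, if_neg hk, applyMoves, hii, hγi1, hμi, hμi1, if_pos rfl,
          ite_true, eq_self_iff_true] at *
        omega
      · simp only [downAt, if_neg hk, if_neg hk2, applyMoves, hγk k hk hk2]
  have hadmγ : AdmissibleOn μ γ := by
    intro k
    by_cases hk : k = i
    · subst hk; rw [hμi]; omega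
    · by_cases hk2 : k = i - 1
      · subst hk2
        have h := hμadm (i - 1)
        rw [hii] at h
        rw [hγi1, hii, hμi]
        omega
      · rw [hγk k hk hk2]; exact hμadm k
  rw [heq] at hmem
  have : γ ∈ B :=
    key_undo n B hB.2 (∑ l ∈ Finset.Icc 1 n, μ l) μ γ le_rfl
      (fun l hl => ⟨(hμsupp l hl).1, le_trans (hμsupp l hl).2 (by omega)⟩) hadmγ hmem
  exact hαmin i hji hin hαi this
end
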